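/- arXiv:2202.13818 — 7 statements merged into one kernel-verified Lean document; each statement's English description precedes it below -/
import Mathlib

section
/- Let E be a real vector space, N a seminorm on E, and c : ℕ → E a sequence satisfying N(c(p+1) − c(p)) = N(c(p+1)) − N(c(p)) for all p ∈ ℕ. Then for every x ∈ E, the sequence p ↦ t_p(x) := N(c(p) + x) − N(c(p)) is antitone (monotonically decreasing), is bounded below by −N(x), and converges to its infimum ℓ(x) = ⨅ p, t_p(x). -/
/-- For a seminorm `N` on a real vector space `E` and a sequence
`c : ℕ → E` satisfying `N (c (p+1) - c p) = N (c (p+1)) - N (c p)`, the sequence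
`t_p(x) = N (c p + x) - N (c p)` is antitone, bounded below by `-N x`, and
converges to its infimum `ℓ(x)`. -/
theorem stmt_0 {E : Type*} [AddCommGroup E] [Module ℝ E]
    (N : Seminorm ℝ E) (c : ℕ → E)
    (hc : ∀ p : ℕ, N (c (p + 1) - c p) = N (c (p + 1)) - N (c p)) (x : E) :
    Antitone (fun p : ℕ => N (c p + x) - N (c p)) ∧
    (∀ p : ℕ, -N x ≤ N (c p + x) - N (c p)) ∧
    Filter.Tendsto (fun p : ℕ => N (c p + x) - N (c p)) Filter.atTop
      (nhds (⨅ p : ℕ, (N (c p + x) - N (c p)))) := by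
  have hanti : Antitone (fun p : ℕ => N (c p + x) - N (c p)) := by
    apply antitone_nat_of_succ_le
    intro p
    have h1 : N (c (p + 1) + x) ≤ N (c (p + 1) - c p) + N (c p + x) := by
      have := map_add_le_add N (c (p + 1) - c p) (c p + x)
      rw [show c (p+1) - c p + (c p + x) = c (p+1) + x by abel] at this; exact this
    have := hc p
    linarith
  have hbdd : ∀ p : ℕ, -N x ≤ N (c p + x) - N (c p) := by
    intro p
    have h1 : N (c p) ≤ N (c p + x) + N x := by
      have := map_add_le_add N (c p + x) (-x)
      simpa [map_neg_eq_map] using this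
    linarith
  refine ⟨hanti, hbdd, ?_⟩
  exact tendsto_atTop_ciInf hanti ⟨-N x, fun y ⟨p, hp⟩ => hp ▸ hbdd p⟩
end

section
/- Let E be a real vector space, N a seminorm on E, c : ℕ → E a sequence, and x ∈ E. If g : E → ℝ is a linear functional with g(z) ≤ N(z) for all z ∈ E and g(c(p)) = N(c(p)) for all p ∈ ℕ, then −ℓ(−x) ≤ g(x) ≤ ℓ(x), where ℓ(x) = ⨅ p, (N(c(p) + x) − N(c(p))). -/
/-- If `g : E → ℝ` is linear with `g ≤ N` and `g (c p) = N (c p)` for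
all `p`, then `-ℓ(-x) ≤ g x ≤ ℓ(x)`, where `ℓ(x) = ⨅ p, (N (c p + x) - N (c p))`. -/
theorem stmt_2 {E : Type*} [AddCommGroup E] [Module ℝ E]
    (N : Seminorm ℝ E) (c : ℕ → E) (x : E)
    (g : E →ₗ[ℝ] ℝ) (hg : ∀ z : E, g z ≤ N z) (hgc : ∀ p : ℕ, g (c p) = N (c p)) :
    -(⨅ p : ℕ, (N (c p + -x) - N (c p))) ≤ g x ∧
    g x ≤ ⨅ p : ℕ, (N (c p + x) - N (c p)) := by
  have key : ∀ y : E, g y ≤ ⨅ p : ℕ, (N (c p + y) - N (c p)) := by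
    intro y
    refine le_ciInf fun p => ?_
    have := hg (c p + y)
    rw [map_add, hgc p] at this
    linarith
  refine ⟨?_, key x⟩
  have := key (-x)
  rw [map_neg] at this
  linarith
end

section
/- Let E be a real vector space, N a seminorm on E, and b : ι → E a family such that N is conically additive on b. If g : E → ℝ is a linear functional with g(b(i)) = N(b(i)) for all i ∈ ι, then g(t) ≤ N(t) for every t in the linear span of the family b (i.e., g is dominated by N on the span of b). -/
/-- `t` lies in the cone generated by the family `b`: it is a finite non-negative
linear combination of the `b i`. -/
def InCone {E ι : Type*} [AddCommGroup E] [Module ℝ E] (b : ι → E) (t : E) : Prop :=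
  ∃ a : ι →₀ ℝ, (∀ i, 0 ≤ a i) ∧ t = a.sum fun i r => r • b i

/-- The seminorm `N` is conically additive on the family `b`. -/
def ConicallyAdditive {E ι : Type*} [AddCommGroup E] [Module ℝ E]
    (N : Seminorm ℝ E) (b : ι → E) : Prop :=
  ∀ a : ι →₀ ℝ, (∀ i, 0 ≤ a i) →
    N (a.sum fun i r => r • b i) = a.sum fun i r => r * N (b i)

/-- If `N` is conically additive on `b` and `g` is a linear functional
with `g (b i) = N (b i)` for all `i`, then `g ≤ N` on the linear span of `b`. -/
theorem stmt_4 {E ι : Type*} [AddCommGroup E] [Module ℝ E]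
    (N : Seminorm ℝ E) (b : ι → E) (hN : ConicallyAdditive N b)
    (g : E →ₗ[ℝ] ℝ) (hgb : ∀ i, g (b i) = N (b i)) :
    ∀ t ∈ Submodule.span ℝ (Set.range b), g t ≤ N t := by
  intro t ht
  obtain ⟨c, hc⟩ := (Finsupp.mem_span_range_iff_exists_finsupp).1 ht
  set p : ι →₀ ℝ := c.mapRange (fun x => max x 0) (by simp)
  set n : ι →₀ ℝ := c.mapRange (fun x => max (-x) 0) (by simp)
  have hp : ∀ i, 0 ≤ p i := fun i => le_max_right _ _
  have hn : ∀ i, 0 ≤ n i := fun i => le_max_right _ _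
  have hpn : ∀ i, c i = p i - n i := by
    intro i
    simp only [p, n, Finsupp.mapRange_apply]
    rcases le_total (c i) 0 with h | h
    · rw [max_eq_right h, max_eq_left (by linarith)]; ring
    · rw [max_eq_left h, max_eq_right (by linarith)]; ring
  set P := p.sum fun i r => r • b i
  set Q := n.sum fun i r => r • b i
  have hgP : g P = N P := by
    rw [hN p hp, map_finsuppSum]
    refine Finsupp.sum_congr fun i _ => ?_
    rw [map_smul, hgb]; rfl
  have hgQ : g Q = N Q := by
    rw [hN n hn, map_finsuppSum]
    refine Finsupp.sum_congr fun i _ => ?_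
    rw [map_smul, hgb]; rfl
  have htPQ : t = P - Q := by
    rw [← hc]
    have : c = p - n := by ext i; simp [hpn i]
    rw [this, Finsupp.sum_sub_index (fun i r1 r2 => sub_smul r1 r2 (b i))]
  have h1 : N P ≤ N (P - Q) + N Q := by
    simpa [sub_neg_eq_add, map_neg_eq_map] using map_add_le_add N (P - Q) Q
  calc g t = N P - N Q := by rw [htPQ, map_sub, hgP, hgQ]
    _ ≤ N (P - Q) := by linarith
    _ = N t := by rw [htPQ]
end

section
/- Let E be a real vector space, N a seminorm on E, and b : ι → E a linearly independent family such that N is conically additive on b. Then there exists a linear functional g : E → ℝ with g(z) ≤ N(z) for all z ∈ E and g(b(i)) = N(b(i)) for all i ∈ ι. -/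
lemma key_ineq {E ι : Type*} [AddCommGroup E] [Module ℝ E]
    (N : Seminorm ℝ E) (b : ι → E) (hN : ConicallyAdditive N b) (a : ι →₀ ℝ) :
    Finsupp.linearCombination ℝ (fun i => (N (b i) : ℝ)) a
      ≤ N (Finsupp.linearCombination ℝ b a) := by
  set L := Finsupp.linearCombination ℝ (fun i => (N (b i) : ℝ))
  set T := Finsupp.linearCombination ℝ b
  set p : ι →₀ ℝ := a.mapRange (fun r => max r 0) (by simp)
  set n : ι →₀ ℝ := a.mapRange (fun r => max (-r) 0) (by simp)
  have hpn : p - n = a := by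
    ext i
    simp [p, n, max_zero_sub_max_neg_zero_eq_self]
  have hp : ∀ i, 0 ≤ p i := fun i => by simp [p]
  have hn : ∀ i, 0 ≤ n i := fun i => by simp [n]
  have hLp : L p = N (T p) := by
    have := hN p hp
    simp only [Finsupp.linearCombination_apply, L, T]
    rw [this]; simp [smul_eq_mul]
  have hLn : L n = N (T n) := by
    have := hN n hn
    simp only [Finsupp.linearCombination_apply, L, T]
    rw [this]; simp [smul_eq_mul]
  have hTa : T p = T a + T n := by
    rw [← hpn]; simp
  have hNp : (N (T p) : ℝ) ≤ N (T a) + N (T n) := by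
    rw [hTa]; exact N.add_le' _ _
  have : L a = L p - L n := by rw [← hpn]; simp
  rw [this, hLp, hLn]
  linarith

/-- If `b` is a linearly independent family on which the seminorm `N`
is conically additive, then there is a linear functional `g : E → ℝ` dominated by
`N` with `g (b i) = N (b i)` for all `i`. -/
theorem stmt_5 {E ι : Type*} [AddCommGroup E] [Module ℝ E]
    (N : Seminorm ℝ E) (b : ι → E) (hb : LinearIndependent ℝ b)
    (hN : ConicallyAdditive N b) :
    ∃ g : E →ₗ[ℝ] ℝ, (∀ z : E, g z ≤ N z) ∧ ∀ i, g (b i) = N (b i) := by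
  set L := Finsupp.linearCombination ℝ (fun i => (N (b i) : ℝ))
  set f : Submodule.span ℝ (Set.range b) →ₗ[ℝ] ℝ := L.comp (hb.repr : _ →ₗ[ℝ] (ι →₀ ℝ))
  have hf : ∀ x : Submodule.span ℝ (Set.range b), f x ≤ N x := by
    intro x
    have h := key_ineq N b hN (hb.repr x)
    rwa [hb.linearCombination_repr x] at h
  obtain ⟨g, hg1, hg2⟩ := exists_extension_of_le_sublinear ⟨_, f⟩ (fun z => N z)
    (fun c hc x => by show N (c • x) = c * N x; rw [map_smul_eq_mul, Real.norm_of_nonneg hc.le])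
    (fun x y => N.add_le' x y) hf
  refine ⟨g, hg2, fun i => ?_⟩
  have hmem : b i ∈ Submodule.span ℝ (Set.range b) :=
    Submodule.subset_span (Set.mem_range_self i)
  have := hg1 ⟨b i, hmem⟩
  rw [this]
  have hrepr : hb.repr ⟨b i, hmem⟩ = Finsupp.single i 1 :=
    hb.repr_eq_single i _ rfl
  show L (hb.repr ⟨b i, hmem⟩) = _
  rw [hrepr]
  simp [L]
end

section
/- Let E be a real vector space, N a seminorm on E, b : ι → E a family such that N is conically additive on b, and c : ℕ → E a sequence with each c(p) in the cone generated by b, such that for every t in the cone generated by b there exists p ∈ ℕ with N(c(p) − t) ≤ N(c(p)) − N(t). Then for every t in the cone generated by b and every x ∈ E, N(t) + ℓ(x) ≤ N(t + x), where ℓ(x) = ⨅ p, (N(c(p) + x) − N(c(p))). -/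
/-- abstract form of the inequality (‡).  If `N` is conically
additive on `b`, each `c p` lies in the cone generated by `b`, and every cone
element `t` admits some `p` with `N (c p - t) ≤ N (c p) - N t`, then
`N t + ℓ(x) ≤ N (t + x)` for every cone element `t` and every `x`, where
`ℓ(x) = ⨅ p, (N (c p + x) - N (c p))`. -/
theorem stmt_9 {E ι : Type*} [AddCommGroup E] [Module ℝ E]
    (N : Seminorm ℝ E) (b : ι → E) (hN : ConicallyAdditive N b)
    (c : ℕ → E) (hc : ∀ p : ℕ, InCone b (c p))
    (hfac : ∀ t : E, InCone b t → ∃ p : ℕ, N (c p - t) ≤ N (c p) - N t) :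
    ∀ t : E, InCone b t → ∀ x : E,
      N t + (⨅ p : ℕ, (N (c p + x) - N (c p))) ≤ N (t + x) := by
  intro t ht x
  obtain ⟨p, hp⟩ := hfac t ht
  have hbdd : BddBelow (Set.range fun q : ℕ => N (c q + x) - N (c q)) := by
    refine ⟨-N x, ?_⟩
    rintro _ ⟨q, rfl⟩
    dsimp only
    have : N (c q) ≤ N (c q + x) + N x := by
      have := map_add_le_add N (c q + x) (-x)
      simpa [map_neg_eq_map] using this
    linarith
  have h1 : (⨅ q : ℕ, (N (c q + x) - N (c q))) ≤ N (c p + x) - N (c p) :=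
    ciInf_le hbdd p
  have h2 : N (c p + x) ≤ N (c p - t) + N (t + x) := by
    have he : c p + x = (c p - t) + (t + x) := by abel
    rw [he]; exact map_add_le_add N _ _
  linarith
end

section
/- Let E be a real vector space, N a seminorm on E, b : ι → E a linearly independent family such that N is conically additive on b, and c : ℕ → E a sequence with each c(p) in the cone generated by b, such that for every t in the cone generated by b there exists p ∈ ℕ with N(c(p) − t) ≤ N(c(p)) − N(t). Then for every x ∈ E, the set of values { g(x) : g : E → ℝ linear, g(z) ≤ N(z) for all z ∈ E, and g(b(i)) = N(b(i)) for all i ∈ ι } is exactly the closed interval [−ℓ(−x), ℓ(x)], where ℓ(x) = ⨅ p, (N(c(p) + x) − N(c(p))). -/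
open Set

section Sublinear

variable {E : Type*} [AddCommGroup E] [Module ℝ E] {p : E → ℝ}
  (p_hom : ∀ a : ℝ, 0 < a → ∀ x, p (a • x) = a * p x) (p_add : ∀ x y, p (x + y) ≤ p x + p y)

include p_hom in
lemma map_zero_of_pos_homogeneous : p 0 = 0 := by
  have h := p_hom 2 two_pos 0
  rw [smul_zero] at h
  linarith

include p_hom in
lemma mul_le_of_mem_Icc {x : E} {y : ℝ} (hy : y ∈ Icc (-p (-x)) (p x)) (a : ℝ) :
    a * y ≤ p (a • x) := by
  rcases lt_trichotomy a 0 with ha | rfl | ha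
  · rw [show a • x = (-a) • -x by rw [smul_neg, neg_smul, neg_neg], p_hom _ (neg_pos.2 ha)]
    nlinarith [hy.1]
  · simp [map_zero_of_pos_homogeneous p_hom]
  · rw [p_hom a ha]
    nlinarith [hy.2]

include p_hom p_add in
theorem setOf_apply_linearMap_le_eq_Icc (x : E) :
    {y : ℝ | ∃ g : E →ₗ[ℝ] ℝ, (∀ z, g z ≤ p z) ∧ g x = y} = Icc (-p (-x)) (p x) := by
  ext y
  constructor
  · rintro ⟨g, hg, rfl⟩
    have := hg (-x)
    rw [map_neg] at this
    exact ⟨by linarith, hg x⟩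
  · intro hy
    have hp := mul_le_of_mem_Icc p_hom hy
    have H : ∀ a : ℝ, a • x = 0 → a • y = 0 := fun a ha => by
      have h₁ := hp a
      have h₂ := hp (-a)
      rw [neg_smul, ha, neg_zero, map_zero_of_pos_homogeneous p_hom] at h₂
      rw [ha, map_zero_of_pos_homogeneous p_hom] at h₁
      rw [smul_eq_mul]
      linarith
    let f := LinearPMap.mkSpanSingleton' (σ := RingHom.id ℝ) x y H
    have hf : ∀ z : f.domain, f z ≤ p z := by
      rintro ⟨z, hz⟩
      obtain ⟨a, rfl⟩ := Submodule.mem_span_singleton.mp hz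
      rw [LinearPMap.mkSpanSingleton'_apply]
      exact hp a
    obtain ⟨g, hgf, hgp⟩ := exists_extension_of_le_sublinear f p p_hom p_add hf
    have hx : x ∈ f.domain := Submodule.mem_span_singleton_self x
    refine ⟨g, hgp, ?_⟩
    rw [hgf ⟨x, hx⟩]
    exact LinearPMap.mkSpanSingleton'_apply_self x y H hx

end Sublinear

namespace InCone

variable {E ι : Type*} [AddCommGroup E] [Module ℝ E] {b : ι → E} {s t : E}

lemma zero (b : ι → E) : InCone b 0 := ⟨0, fun _ => le_rfl, by simp⟩

lemma apply (b : ι → E) (i : ι) : InCone b (b i) := by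
  classical
  refine ⟨Finsupp.single i 1, fun j => ?_, by simp⟩
  rw [Finsupp.single_apply]
  split_ifs <;> norm_num

lemma add (hs : InCone b s) (ht : InCone b t) : InCone b (s + t) := by
  obtain ⟨a, ha, rfl⟩ := hs
  obtain ⟨a', ha', rfl⟩ := ht
  refine ⟨a + a', fun i => add_nonneg (ha i) (ha' i), ?_⟩
  rw [Finsupp.sum_add_index' (fun i => zero_smul ℝ (b i)) (fun i r s => add_smul r s (b i))]

lemma smul {r : ℝ} (hr : 0 ≤ r) (ht : InCone b t) : InCone b (r • t) := by
  obtain ⟨a, ha, rfl⟩ := ht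
  refine ⟨r • a, fun i => mul_nonneg hr (ha i), ?_⟩
  rw [Finsupp.sum_smul_index' (fun i => zero_smul ℝ (b i)), Finsupp.smul_sum]
  exact Finsupp.sum_congr fun i _ => (smul_assoc r (a i) (b i)).symm

end InCone

namespace ConicallyAdditive

variable {E ι : Type*} [AddCommGroup E] [Module ℝ E] {N : Seminorm ℝ E} {b : ι → E} {s t : E}

lemma map_add (hN : ConicallyAdditive N b) (hs : InCone b s) (ht : InCone b t) :
    N (s + t) = N s + N t := by
  obtain ⟨a, ha, rfl⟩ := hs
  obtain ⟨a', ha', rfl⟩ := ht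
  rw [← Finsupp.sum_add_index' (fun i => zero_smul ℝ (b i)) (fun i r s => add_smul r s (b i)),
    hN (a + a') (fun i => add_nonneg (ha i) (ha' i)),
    Finsupp.sum_add_index' (fun i => zero_mul (N (b i))) (fun i r s => add_mul r s (N (b i))),
    hN a ha, hN a' ha']

lemma linearMap_apply_eq (hN : ConicallyAdditive N b) {g : E →ₗ[ℝ] ℝ}
    (hg : ∀ i, g (b i) = N (b i)) (ht : InCone b t) : g t = N t := by
  obtain ⟨a, ha, rfl⟩ := ht
  rw [map_finsuppSum, hN a ha]
  exact Finsupp.sum_congr fun i _ => by rw [map_smul, smul_eq_mul, hg i]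

end ConicallyAdditive

section Ell

variable {E ι : Type*} [AddCommGroup E] [Module ℝ E] {N : Seminorm ℝ E} {b : ι → E}
  {c : ℕ → E}

noncomputable def ell (N : Seminorm ℝ E) (c : ℕ → E) (x : E) : ℝ :=
  ⨅ p, (N (c p + x) - N (c p))

lemma neg_le_seminorm_add_sub (N : Seminorm ℝ E) (t x : E) : -N x ≤ N (t + x) - N t := by
  have := map_add_le_add N (t + x) (-x)
  rw [add_neg_cancel_right, map_neg_eq_map] at this
  linarith

lemma bddBelow_ell (N : Seminorm ℝ E) (c : ℕ → E) (x : E) :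
    BddBelow (range fun p => N (c p + x) - N (c p)) :=
  ⟨-N x, forall_mem_range.2 fun p => neg_le_seminorm_add_sub N (c p) x⟩

lemma ell_le_sub (hfac : ∀ t : E, InCone b t → ∃ p : ℕ, N (c p - t) ≤ N (c p) - N t)
    {t : E} (ht : InCone b t) (x : E) : ell N c x ≤ N (t + x) - N t := by
  obtain ⟨p, hp⟩ := hfac t ht
  have htri : N (c p + x) ≤ N (c p - t) + N (t + x) := by
    have := map_add_le_add N (c p - t) (t + x)
    rwa [show c p - t + (t + x) = c p + x by abel] at this
  have := ciInf_le (bddBelow_ell N c x) p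
  simp only [ell] at this ⊢
  linarith

lemma ell_le (hfac : ∀ t : E, InCone b t → ∃ p : ℕ, N (c p - t) ≤ N (c p) - N t) (x : E) :
    ell N c x ≤ N x := by
  simpa using ell_le_sub hfac (InCone.zero b) x

variable (hN : ConicallyAdditive N b) (hc : ∀ p : ℕ, InCone b (c p))
  (hfac : ∀ t : E, InCone b t → ∃ p : ℕ, N (c p - t) ≤ N (c p) - N t)

include hN hc hfac in
lemma ell_add_le (x y : E) : ell N c (x + y) ≤ ell N c x + ell N c y := by
  refine le_ciInf_add_ciInf fun p q => ?_
  have hsum := ell_le_sub hfac ((hc p).add (hc q)) (x + y)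
  have htri : N (c p + c q + (x + y)) ≤ N (c p + x) + N (c q + y) := by
    rw [add_add_add_comm]
    exact map_add_le_add N _ _
  rw [hN.map_add (hc p) (hc q)] at hsum
  linarith

include hc hfac in
lemma ell_smul_le {a : ℝ} (ha : 0 < a) (x : E) : ell N c (a • x) ≤ a * ell N c x := by
  rw [← div_le_iff₀' ha]
  refine le_ciInf fun p => ?_
  rw [div_le_iff₀' ha]
  calc ell N c (a • x) ≤ N (a • c p + a • x) - N (a • c p) :=
        ell_le_sub hfac ((hc p).smul ha.le) (a • x)
    _ = a * (N (c p + x) - N (c p)) := by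
        rw [← smul_add, map_smul_eq_mul, map_smul_eq_mul, Real.norm_of_nonneg ha.le, mul_sub]

include hc hfac in
lemma ell_smul {a : ℝ} (ha : 0 < a) (x : E) : ell N c (a • x) = a * ell N c x := by
  refine le_antisymm (ell_smul_le hc hfac ha x) ?_
  have h := mul_le_mul_of_nonneg_left (ell_smul_le hc hfac (inv_pos.2 ha) (a • x)) ha.le
  rwa [inv_smul_smul₀ ha.ne', mul_inv_cancel_left₀ ha.ne'] at h

include hN hc hfac in
lemma linearMap_le_ell_iff (g : E →ₗ[ℝ] ℝ) :
    (∀ z, g z ≤ ell N c z) ↔ (∀ z, g z ≤ N z) ∧ ∀ i, g (b i) = N (b i) := by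
  constructor
  · intro hg
    have hgN : ∀ z, g z ≤ N z := fun z => (hg z).trans (ell_le hfac z)
    refine ⟨hgN, fun i => le_antisymm (hgN (b i)) ?_⟩
    have h := (hg (-b i)).trans (ell_le_sub hfac (InCone.apply b i) (-b i))
    rw [map_neg, add_neg_cancel, map_zero] at h
    linarith
  · rintro ⟨hgN, hgb⟩ z
    refine le_ciInf fun p => ?_
    have h := hgN (c p + z)
    rw [map_add, hN.linearMap_apply_eq hgb (hc p)] at h
    linarith

end Ell

theorem stmt_10_general {E ι : Type*} [AddCommGroup E] [Module ℝ E]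
    (N : Seminorm ℝ E) (b : ι → E)
    (hN : ConicallyAdditive N b)
    (c : ℕ → E) (hc : ∀ p : ℕ, InCone b (c p))
    (hfac : ∀ t : E, InCone b t → ∃ p : ℕ, N (c p - t) ≤ N (c p) - N t) :
    ∀ x : E,
      {y : ℝ | ∃ g : E →ₗ[ℝ] ℝ,
          (∀ z : E, g z ≤ N z) ∧ (∀ i, g (b i) = N (b i)) ∧ g x = y} =
        Set.Icc (-(⨅ p : ℕ, (N (c p + -x) - N (c p))))
          (⨅ p : ℕ, (N (c p + x) - N (c p))) := by
  intro x
  have h := setOf_apply_linearMap_le_eq_Icc (fun _ ha => ell_smul hc hfac ha) (ell_add_le hN hc hfac) x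
  simp only [linearMap_le_ell_iff hN hc hfac, and_assoc] at h
  exact h

/-- abstract form of Theorem 1.2.  Under the hypotheses on `b`, `N`
and `c`, for every `x ∈ E` the set of values `g x` over all linear functionals
`g` dominated by `N` and taking the value `N (b i)` at each `b i` is exactly the
closed interval `[-ℓ(-x), ℓ(x)]`, where `ℓ(x) = ⨅ p, (N (c p + x) - N (c p))`. -/
theorem stmt_10 {E ι : Type*} [AddCommGroup E] [Module ℝ E]
    (N : Seminorm ℝ E) (b : ι → E) (hb : LinearIndependent ℝ b)
    (hN : ConicallyAdditive N b)
    (c : ℕ → E) (hc : ∀ p : ℕ, InCone b (c p))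
    (hfac : ∀ t : E, InCone b t → ∃ p : ℕ, N (c p - t) ≤ N (c p) - N t) :
    ∀ x : E,
      {y : ℝ | ∃ g : E →ₗ[ℝ] ℝ,
          (∀ z : E, g z ≤ N z) ∧ (∀ i, g (b i) = N (b i)) ∧ g x = y} =
        Set.Icc (-(⨅ p : ℕ, (N (c p + -x) - N (c p))))
          (⨅ p : ℕ, (N (c p + x) - N (c p))) :=
  stmt_10_general N b hN c hc hfac
end

section
/- Let E be a real vector space, N a seminorm on E, c : ℕ → E a sequence, and x ∈ E such that there exists p ∈ ℕ with N(c(p) + x) + N(c(p) − x) = 2·N(c(p)). If g₁, g₂ : E → ℝ are linear functionals each satisfying g_j(z) ≤ N(z) for all z ∈ E and g_j(c(q)) = N(c(q)) for all q ∈ ℕ (j = 1, 2), then g₁(x) = g₂(x). -/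
lemma aux_bound {E : Type*} [AddCommGroup E] [Module ℝ E]
    (N : Seminorm ℝ E) (p : ℕ) (c : ℕ → E) (x : E) (g : E →ₗ[ℝ] ℝ)
    (hg : ∀ z : E, g z ≤ N z) (hgc : ∀ q : ℕ, g (c q) = N (c q)) :
    g x ≤ N (c p + x) - N (c p) ∧ -g x ≤ N (c p - x) - N (c p) := by
  constructor
  · have := hg (c p + x)
    simp [map_add, hgc p] at this
    linarith
  · have := hg (c p - x)
    simp [map_sub, hgc p] at this
    linarith

/-- abstract form of Proposition 2.2 (all slice-torus invariants
agree on squeezed knots).  If `N (c p + x) + N (c p - x) = 2 * N (c p)` for some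
`p`, then any two linear functionals dominated by `N` and equal to `N` on the
sequence `c` agree at `x`. -/
theorem stmt_12 {E : Type*} [AddCommGroup E] [Module ℝ E]
    (N : Seminorm ℝ E) (c : ℕ → E) (x : E)
    (h : ∃ p : ℕ, N (c p + x) + N (c p - x) = 2 * N (c p))
    (g₁ g₂ : E →ₗ[ℝ] ℝ)
    (hg₁ : ∀ z : E, g₁ z ≤ N z) (hg₁c : ∀ q : ℕ, g₁ (c q) = N (c q))
    (hg₂ : ∀ z : E, g₂ z ≤ N z) (hg₂c : ∀ q : ℕ, g₂ (c q) = N (c q)) :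
    g₁ x = g₂ x := by
  obtain ⟨p, hp⟩ := h
  obtain ⟨h1a, h1b⟩ := aux_bound N p c x g₁ hg₁ hg₁c
  obtain ⟨h2a, h2b⟩ := aux_bound N p c x g₂ hg₂ hg₂c
  linarith
end
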